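/- Properties of the extrapolated potential, part (i): assume the kernel matrix K = (exp(−c_{ij}/2))_{i,j} is positive definite. For every f ∈ ℝ^d, f_i ≤ f^E_i for all i ∈ [d], and f_i = f^E_i for every i in the support of g-softmax(f) (i.e. every i with (g-softmax(f))_i > 0). -/

import Mathlib

open Finset Real Filter

noncomputable section

/-- The probability simplex in `ℝ^d`. -/
def simplexS (d : ℕ) : Set (Fin d → ℝ) := stdSimplex ℝ (Fin d)


open scoped Classical

/-- `Φ_C(α,f) = Σ_{i,j} α_i α_j exp(-(f_i + f_j + c_{ij})/2)`. -/
def Phi {d : ℕ} (C : Matrix (Fin d) (Fin d) ℝ) (α f : Fin d → ℝ) : ℝ :=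
  ∑ i, ∑ j, α i * α j * Real.exp (-(f i + f j + C i j) / 2)

/-- The geometric log-sum-exp `Ω_C^*(f) = -log min_{α ∈ △^d} Φ_C(α, f)`. -/
def OmegaStar {d : ℕ} (C : Matrix (Fin d) (Fin d) ℝ) (f : Fin d → ℝ) : ℝ :=
  -Real.log (sInf ((fun α => Phi C α f) '' simplexS d))

/-- The geometric softmax: the (unique, when the kernel is positive definite) minimizer of
`Φ_C(·, f)` over the simplex. -/
def gsoftmax {d : ℕ} (C : Matrix (Fin d) (Fin d) ℝ) (f : Fin d → ℝ) : Fin d → ℝ :=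
  if h : ∃ α ∈ simplexS d, IsMinOn (fun β => Phi C β f) (simplexS d) α
  then h.choose else fun _ => 0

/-- The soft C-transform `T(f,α)_i = -2 log Σ_j α_j exp((f_j - c_{ij})/2)`. -/
def Tsoft {d : ℕ} (C : Matrix (Fin d) (Fin d) ℝ) (f α : Fin d → ℝ) : Fin d → ℝ :=
  fun i => -2 * Real.log (∑ j, α j * Real.exp ((f j - C i j) / 2))

/-- `f` is the symmetric Sinkhorn potential of `α`: `-f = T(-f, α)`. -/
def IsSinkhornPotential {d : ℕ} (C : Matrix (Fin d) (Fin d) ℝ) (α f : Fin d → ℝ) : Prop :=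
  -f = Tsoft C (-f) α

/-- The symmetric Sinkhorn potential `∇Ω(α)`: the (unique, when the kernel is positive
definite) `f` with `-f = T(-f, α)`. -/
def gradOmega {d : ℕ} (C : Matrix (Fin d) (Fin d) ℝ) (α : Fin d → ℝ) : Fin d → ℝ :=
  if h : ∃ f : Fin d → ℝ, IsSinkhornPotential C α f then h.choose else fun _ => 0

/-- The extrapolation `f^E = -T(-(f - Ω_C^*(f)·1), g-softmax(f)) + Ω_C^*(f)·1`. -/
def extrap {d : ℕ} (C : Matrix (Fin d) (Fin d) ℝ) (f : Fin d → ℝ) : Fin d → ℝ :=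
  fun i => -(Tsoft C (fun j => -(f j - OmegaStar C f)) (gsoftmax C f) i) + OmegaStar C f

/-- The kernel matrix `K = (exp(-c_{ij}/2))_{ij}`. -/
def kernelK {d : ℕ} (C : Matrix (Fin d) (Fin d) ℝ) : Matrix (Fin d) (Fin d) ℝ :=
  Matrix.of fun i j => Real.exp (-(C i j) / 2)


/-!
The geometric softmax `α` minimises the quadratic form `β ↦ βᵀ K_f β` of the symmetric Gibbs
kernel `K_f = (exp(-(f_i + f_j + c_{ij})/2))_{ij}` over the simplex, and unwinding the
definitions gives `f^E_i - f_i = 2 log ((K_f α)_i / αᵀ K_f α)`. The first-order optimality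
conditions of a quadratic form on the simplex say `αᵀ K_f α ≤ (K_f α)_i` for every `i`, with
equality wherever `α_i > 0`.
-/

open Matrix Topology

lemma nonneg_of_forall_mul_add_sq_mul_nonneg {b c : ℝ}
    (h : ∀ t : ℝ, 0 < t → t ≤ 1 → 0 ≤ t * b + t ^ 2 * c) : 0 ≤ b := by
  have hlim : Tendsto (fun t : ℝ => b + t * c) (𝓝[>] 0) (𝓝 b) := by
    have hcont : Continuous fun t : ℝ => b + t * c := by fun_prop
    simpa using hcont.continuousWithinAt.tendsto (x := 0) (s := Set.Ioi 0)
  refine ge_of_tendsto hlim ?_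
  filter_upwards [Ioc_mem_nhdsGT one_pos] with t ⟨ht0, ht1⟩
  exact nonneg_of_mul_nonneg_right (by linarith [h t ht0 ht1]) ht0

section QuadraticForm

variable {ι : Type*} [Fintype ι] {A : Matrix ι ι ℝ}

theorem Matrix.IsSymm.dotProduct_mulVec_comm (hA : A.IsSymm) (x y : ι → ℝ) :
    x ⬝ᵥ A *ᵥ y = y ⬝ᵥ A *ᵥ x := by
  rw [dotProduct_mulVec, dotProduct_comm, ← mulVec_transpose, hA.eq]

theorem Matrix.IsSymm.dotProduct_mulVec_add_smul (hA : A.IsSymm) (x v : ι → ℝ) (t : ℝ) :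
    (x + t • v) ⬝ᵥ A *ᵥ (x + t • v) =
      x ⬝ᵥ A *ᵥ x + t * (2 * (v ⬝ᵥ A *ᵥ x)) + t ^ 2 * (v ⬝ᵥ A *ᵥ v) := by
  simp only [mulVec_add, mulVec_smul, add_dotProduct, dotProduct_add, smul_dotProduct,
    dotProduct_smul, smul_eq_mul, hA.dotProduct_mulVec_comm x v]
  ring

theorem IsMinOn.dotProduct_mulVec_sub_nonneg (hA : A.IsSymm) {S : Set (ι → ℝ)}
    (hS : Convex ℝ S) {x y : ι → ℝ} (hmin : IsMinOn (fun z => z ⬝ᵥ A *ᵥ z) S x)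
    (hx : x ∈ S) (hy : y ∈ S) : 0 ≤ (y - x) ⬝ᵥ A *ᵥ x := by
  suffices 0 ≤ 2 * ((y - x) ⬝ᵥ A *ᵥ x) by linarith
  refine nonneg_of_forall_mul_add_sq_mul_nonneg (c := (y - x) ⬝ᵥ A *ᵥ (y - x))
    fun t ht0 ht1 => ?_
  have hle : x ⬝ᵥ A *ᵥ x ≤ (x + t • (y - x)) ⬝ᵥ A *ᵥ (x + t • (y - x)) :=
    hmin (hS.add_smul_sub_mem hx hy ⟨ht0.le, ht1⟩)
  rw [hA.dotProduct_mulVec_add_smul] at hle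
  linarith

theorem IsMinOn.dotProduct_mulVec_le_mulVec_apply [DecidableEq ι] (hA : A.IsSymm) {x : ι → ℝ}
    (hmin : IsMinOn (fun z => z ⬝ᵥ A *ᵥ z) (stdSimplex ℝ ι) x) (hx : x ∈ stdSimplex ℝ ι)
    (i : ι) : x ⬝ᵥ A *ᵥ x ≤ (A *ᵥ x) i := by
  have := hmin.dotProduct_mulVec_sub_nonneg hA (convex_stdSimplex ℝ ι) hx
    (single_mem_stdSimplex ℝ i)
  rw [sub_dotProduct, single_dotProduct, one_mul] at this
  linarith

theorem IsMinOn.mulVec_apply_eq_of_pos [DecidableEq ι] (hA : A.IsSymm) {x : ι → ℝ}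
    (hmin : IsMinOn (fun z => z ⬝ᵥ A *ᵥ z) (stdSimplex ℝ ι) x) (hx : x ∈ stdSimplex ℝ ι)
    {i : ι} (hi : 0 < x i) : (A *ᵥ x) i = x ⬝ᵥ A *ᵥ x := by
  have hle := hmin.dotProduct_mulVec_le_mulVec_apply hA hx
  refine (((hle i).lt_or_eq).resolve_left fun hlt => lt_irrefl (x ⬝ᵥ A *ᵥ x) ?_).symm
  calc x ⬝ᵥ A *ᵥ x = ∑ j, x j * (x ⬝ᵥ A *ᵥ x) := by rw [← sum_mul, hx.2, one_mul]
    _ < ∑ j, x j * (A *ᵥ x) j :=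
      sum_lt_sum (fun j _ => mul_le_mul_of_nonneg_left (hle j) (hx.1 j))
        ⟨i, mem_univ i, mul_lt_mul_of_pos_left hlt hi⟩
    _ = x ⬝ᵥ A *ᵥ x := rfl

theorem exists_pos_of_mem_stdSimplex {x : ι → ℝ} (hx : x ∈ stdSimplex ℝ ι) : ∃ k, 0 < x k := by
  obtain ⟨k, -, hk⟩ : ∃ k ∈ univ, (0 : ι → ℝ) k < x k := exists_lt_of_sum_lt (by simp [hx.2])
  exact ⟨k, hk⟩

theorem mulVec_apply_pos_of_mem_stdSimplex (hA : ∀ i j, 0 < A i j) {x : ι → ℝ}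
    (hx : x ∈ stdSimplex ℝ ι) (i : ι) : 0 < (A *ᵥ x) i := by
  obtain ⟨k, hk⟩ := exists_pos_of_mem_stdSimplex hx
  exact sum_pos' (fun j _ => mul_nonneg (hA i j).le (hx.1 j))
    ⟨k, mem_univ k, mul_pos (hA i k) hk⟩

theorem dotProduct_mulVec_pos_of_mem_stdSimplex (hA : ∀ i j, 0 < A i j) {x : ι → ℝ}
    (hx : x ∈ stdSimplex ℝ ι) : 0 < x ⬝ᵥ A *ᵥ x := by
  obtain ⟨k, hk⟩ := exists_pos_of_mem_stdSimplex hx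
  exact sum_pos' (fun j _ => mul_nonneg (hx.1 j) (mulVec_apply_pos_of_mem_stdSimplex hA hx j).le)
    ⟨k, mem_univ k, mul_pos hk (mulVec_apply_pos_of_mem_stdSimplex hA hx k)⟩

end QuadraticForm

section GeometricSoftmax

variable {d : ℕ} (C : Matrix (Fin d) (Fin d) ℝ) (f : Fin d → ℝ)

def gibbsKernel : Matrix (Fin d) (Fin d) ℝ :=
  Matrix.of fun i j => exp (-(f i + f j + C i j) / 2)

theorem gibbsKernel_pos (i j : Fin d) : 0 < gibbsKernel C f i j := exp_pos _

variable {C} in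
theorem gibbsKernel_isSymm (hC : C.IsSymm) : (gibbsKernel C f).IsSymm := by
  ext i j
  simp only [gibbsKernel, transpose_apply, of_apply, hC.apply i j]
  ring_nf

theorem Phi_eq_dotProduct_mulVec (α : Fin d → ℝ) : Phi C α f = α ⬝ᵥ gibbsKernel C f *ᵥ α := by
  simp only [Phi, dotProduct, mulVec, gibbsKernel, of_apply, mul_sum]
  exact sum_congr rfl fun i _ => sum_congr rfl fun j _ => by ring

variable [NeZero d]

theorem gsoftmax_mem_and_isMinOn :
    gsoftmax C f ∈ stdSimplex ℝ (Fin d) ∧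
      IsMinOn (fun β => β ⬝ᵥ gibbsKernel C f *ᵥ β) (stdSimplex ℝ (Fin d)) (gsoftmax C f) := by
  have hex : ∃ α ∈ simplexS d, IsMinOn (fun β => Phi C β f) (simplexS d) α :=
    (isCompact_stdSimplex ℝ (Fin d)).exists_isMinOn ⟨_, single_mem_stdSimplex ℝ 0⟩
      (by unfold Phi; fun_prop : Continuous fun β => Phi C β f).continuousOn
  rw [gsoftmax, dif_pos hex]
  simpa only [Phi_eq_dotProduct_mulVec, simplexS] using hex.choose_spec

theorem OmegaStar_eq_neg_log :
    OmegaStar C f = -log (gsoftmax C f ⬝ᵥ gibbsKernel C f *ᵥ gsoftmax C f) := by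
  obtain ⟨hmem, hmin⟩ := gsoftmax_mem_and_isMinOn C f
  simp only [OmegaStar, Phi_eq_dotProduct_mulVec, simplexS]
  have hleast : IsLeast ((fun β => β ⬝ᵥ gibbsKernel C f *ᵥ β) '' stdSimplex ℝ (Fin d))
      (gsoftmax C f ⬝ᵥ gibbsKernel C f *ᵥ gsoftmax C f) :=
    ⟨⟨_, hmem, rfl⟩, Set.forall_mem_image.2 fun _ hβ => hmin hβ⟩
  rw [hleast.csInf_eq]

theorem extrap_eq_add_two_mul_log (i : Fin d) :
    extrap C f i = f i + 2 * log ((gibbsKernel C f *ᵥ gsoftmax C f) i /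
      (gsoftmax C f ⬝ᵥ gibbsKernel C f *ᵥ gsoftmax C f)) := by
  set α := gsoftmax C f
  have hα := (gsoftmax_mem_and_isMinOn C f).1
  have hG := mulVec_apply_pos_of_mem_stdSimplex (gibbsKernel_pos C f) hα i
  have hP := dotProduct_mulVec_pos_of_mem_stdSimplex (gibbsKernel_pos C f) hα
  have hsum : ∑ j, α j * exp ((-(f j - OmegaStar C f) - C i j) / 2) =
      exp ((OmegaStar C f + f i) / 2) * (gibbsKernel C f *ᵥ α) i := by
    simp only [mulVec, dotProduct, gibbsKernel, of_apply, mul_sum]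
    refine sum_congr rfl fun j _ => ?_
    rw [show (-(f j - OmegaStar C f) - C i j) / 2 =
      (OmegaStar C f + f i) / 2 + -(f i + f j + C i j) / 2 by ring, exp_add]
    ring
  rw [extrap, Tsoft, hsum, log_mul (exp_ne_zero _) hG.ne', log_exp, log_div hG.ne' hP.ne',
    OmegaStar_eq_neg_log]
  ring

end GeometricSoftmax

theorem extrap_ge_and_eq_on_support (d : ℕ)
    (C : Matrix (Fin d) (Fin d) ℝ) (hCsym : C.IsSymm)
    (f : Fin d → ℝ) :
    (∀ i, f i ≤ extrap C f i) ∧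
    (∀ i, 0 < gsoftmax C f i → f i = extrap C f i) := by
  suffices h : ∀ i, f i ≤ extrap C f i ∧ (0 < gsoftmax C f i → f i = extrap C f i) from
    ⟨fun i => (h i).1, fun i => (h i).2⟩
  intro i
  have : NeZero d := NeZero.of_pos i.pos
  obtain ⟨hmem, hmin⟩ := gsoftmax_mem_and_isMinOn C f
  have hK := gibbsKernel_isSymm f hCsym
  have hP := dotProduct_mulVec_pos_of_mem_stdSimplex (gibbsKernel_pos C f) hmem
  rw [extrap_eq_add_two_mul_log]
  refine ⟨?_, fun hi => ?_⟩
  · have := log_nonneg ((one_le_div hP).2 (hmin.dotProduct_mulVec_le_mulVec_apply hK hmem i))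
    linarith
  · rw [hmin.mulVec_apply_eq_of_pos hK hmem hi, div_self hP.ne', log_one]
    ring
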